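/- Let N ∈ ℕ with N ≥ 1 and d ∈ ℝ, and let a : ℕ → ℝ be the even-parity QES coefficient sequence for parameters (N, d). Then a(N+1) = 0 if and only if det P^{(N,N+1)}(d) = 0, where P^{(N,N+1)}(d) is the (N+1)×(N+1) tridiagonal matrix defined in the context. (Thus the QES-compatible shifts d are exactly the zeros of the polynomial d ↦ det P^{(N,N+1)}(d).) -/

import Mathlib

/-!
Let `T` be the infinite matrix with the entry formula of `P^(N,k)(d)`, so that `P^(N,k)(d)` is
its leading `k × k` block. `T` vanishes above its superdiagonal, its superdiagonal entries never
vanish, and the recurrence (with `a 1 = -d`) says that every row of `T` annihilates `a`. So the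
block of size `k + 1` sends the truncation `v = (a 0, …, a k)` to `-T k (k+1) · a (k+1)` times
the last unit vector. On the other hand its first `k` rows determine a vector from its first
entry, so every kernel vector is a multiple of `v`. Hence the block is singular exactly when
`a (k+1) = 0`, for every `k`.
-/

/-- The k×k tridiagonal matrix `P^(N,k)(d)` of the even-parity QES construction:
`P 0 0 = d`, `P i i = 2·i·d` for `i ≥ 1`, `P 0 1 = 1`,
`P i (i+1) = i·(i+1)` for `i ≥ 1`, `P i (i-1) = 2·(N − i + 1)`, all other entries `0`. -/
def Pmat (N : ℕ) (d : ℝ) (k : ℕ) : Matrix (Fin k) (Fin k) ℝ :=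
  Matrix.of fun i j =>
    if (i : ℕ) = 0 ∧ (j : ℕ) = 0 then d
    else if (j : ℕ) = (i : ℕ) then 2 * (i : ℝ) * d
    else if (i : ℕ) = 0 ∧ (j : ℕ) = 1 then 1
    else if (j : ℕ) = (i : ℕ) + 1 then (i : ℝ) * ((i : ℝ) + 1)
    else if (j : ℕ) + 1 = (i : ℕ) then 2 * ((N : ℝ) - (i : ℝ) + 1)
    else 0

open Finset Matrix

section LeadingBlock

variable {K : Type*} [Field K]

def leadingBlock (T : ℕ → ℕ → K) (n : ℕ) : Matrix (Fin n) (Fin n) K :=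
  Matrix.of fun i j => T i j

theorem leadingBlock_mulVec (T : ℕ → ℕ → K) (n : ℕ) (u : ℕ → K) (i : Fin n) :
    (leadingBlock T n *ᵥ fun j => u j) i = ∑ j ∈ range n, T i j * u j :=
  Fin.sum_univ_eq_sum_range (fun j => T i j * u j) n

variable {T : ℕ → ℕ → K}

theorem sum_range_eq_sum_range_add_two (hband : ∀ i j, i + 1 < j → T i j = 0) {i n : ℕ}
    (hn : i + 2 ≤ n) (u : ℕ → K) :
    ∑ j ∈ range n, T i j * u j = ∑ j ∈ range (i + 2), T i j * u j := by
  refine (sum_subset (range_subset_range.2 hn) fun j _ hj => ?_).symm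
  rw [hband i j (by simp only [mem_range] at hj; omega), zero_mul]

theorem leadingBlock_mulVec_eq_single (hband : ∀ i j, i + 1 < j → T i j = 0) {a : ℕ → K}
    (ha : ∀ i, ∑ j ∈ range (i + 2), T i j * a j = 0) (k : ℕ) :
    leadingBlock T (k + 1) *ᵥ (fun j => a j) =
      Pi.single (Fin.last k) (-(T k (k + 1) * a (k + 1))) := by
  ext i
  rw [leadingBlock_mulVec]
  by_cases hi : i = Fin.last k
  · subst hi
    have hrow := ha k
    rw [sum_range_succ] at hrow
    simp only [Fin.val_last, Pi.single_eq_same]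
    linear_combination hrow
  · have hik : (i : ℕ) < k := Fin.val_lt_last hi
    rw [Pi.single_eq_of_ne hi, sum_range_eq_sum_range_add_two hband (by omega), ha]

theorem eq_zero_of_rows_eq_zero (hsup : ∀ i, T i (i + 1) ≠ 0) {u : ℕ → K} (hu0 : u 0 = 0)
    {k : ℕ} (hu : ∀ i < k, ∑ j ∈ range (i + 2), T i j * u j = 0) : ∀ j ≤ k, u j = 0 := by
  intro j hj
  induction j using Nat.strong_induction_on with
  | _ j ih =>
    cases j with
    | zero => exact hu0
    | succ i =>
      have hrow := hu i (by omega)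
      rw [sum_range_succ, sum_eq_zero fun j hj => by
        rw [ih j (by simp only [mem_range] at hj; omega) (by simp only [mem_range] at hj; omega),
          mul_zero], zero_add] at hrow
      exact (mul_eq_zero.1 hrow).resolve_left (hsup i)

theorem eq_zero_of_leadingBlock_mulVec (hband : ∀ i j, i + 1 < j → T i j = 0)
    (hsup : ∀ i, T i (i + 1) ≠ 0) {k : ℕ} {w : Fin (k + 1) → K} (hw0 : w 0 = 0)
    (hw : ∀ i, i ≠ Fin.last k → (leadingBlock T (k + 1) *ᵥ w) i = 0) : w = 0 := by
  set u : ℕ → K := fun n => if h : n < k + 1 then w ⟨n, h⟩ else 0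
  have hwu : w = fun j : Fin (k + 1) => u j := by
    funext j
    simp only [u, dif_pos j.isLt, Fin.eta]
  have hu := eq_zero_of_rows_eq_zero hsup (u := u) (by simpa [u] using hw0) (k := k)
    fun i hi => by
      have hrow := hw ⟨i, by omega⟩ (by rw [Ne, Fin.ext_iff, Fin.val_last]; exact Nat.ne_of_lt hi)
      rwa [hwu, leadingBlock_mulVec,
        sum_range_eq_sum_range_add_two hband (show i + 2 ≤ k + 1 by omega)] at hrow
  funext j
  rw [hwu]
  exact hu j (by omega)

theorem det_leadingBlock_eq_zero_iff (hband : ∀ i j, i + 1 < j → T i j = 0)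
    (hsup : ∀ i, T i (i + 1) ≠ 0) {a : ℕ → K} (ha0 : a 0 ≠ 0)
    (ha : ∀ i, ∑ j ∈ range (i + 2), T i j * a j = 0) (k : ℕ) :
    (leadingBlock T (k + 1)).det = 0 ↔ a (k + 1) = 0 := by
  set v : Fin (k + 1) → K := fun j => a j
  have hv := leadingBlock_mulVec_eq_single hband ha k
  rw [← exists_mulVec_eq_zero_iff]
  constructor
  · rintro ⟨w, hw, hAw⟩
    set c := w 0 / a 0
    have hwv : w = c • v := by
      rw [← sub_eq_zero]
      refine eq_zero_of_leadingBlock_mulVec hband hsup ?_ fun i hi => ?_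
      · simp [c, v, ha0]
      · rw [mulVec_sub, mulVec_smul, hAw, hv]
        simp [Pi.single_eq_of_ne hi]
    have hc : c ≠ 0 := fun hc => hw (by rw [hwv, hc, zero_smul])
    have hlast := congrFun hAw (Fin.last k)
    rw [hwv, mulVec_smul, hv] at hlast
    simpa [hc, hsup k] using hlast
  · intro hak
    refine ⟨v, fun h => ha0 (by simpa [v] using congrFun h 0), ?_⟩
    rw [hv, hak, mul_zero, neg_zero, Pi.single_zero]

end LeadingBlock

def qesEntry (N : ℕ) (d : ℝ) (i j : ℕ) : ℝ :=
  if i = 0 ∧ j = 0 then d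
  else if j = i then 2 * (i : ℝ) * d
  else if i = 0 ∧ j = 1 then 1
  else if j = i + 1 then (i : ℝ) * ((i : ℝ) + 1)
  else if j + 1 = i then 2 * ((N : ℝ) - (i : ℝ) + 1)
  else 0

theorem Pmat_eq_leadingBlock (N : ℕ) (d : ℝ) (k : ℕ) :
    Pmat N d k = leadingBlock (qesEntry N d) k :=
  rfl

section QES

variable {N : ℕ} {d : ℝ}

theorem qesEntry_eq_zero_of_outside_band {i j : ℕ} (h : i + 1 < j ∨ j + 1 < i) :
    qesEntry N d i j = 0 := by
  unfold qesEntry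
  split_ifs <;> first | rfl | omega

theorem qesEntry_superdiag_ne_zero (i : ℕ) : qesEntry N d i (i + 1) ≠ 0 := by
  cases i with
  | zero => simp [qesEntry]
  | succ i =>
    rw [qesEntry, if_neg (by omega), if_neg (by omega), if_neg (by omega), if_pos rfl]
    positivity

theorem qesEntry_sum_range_eq_zero {a : ℕ → ℝ} (h0 : a 0 = 1) (h1 : a 1 = -d)
    (hrec : ∀ n : ℕ, (2 * (N : ℝ) - 2 * n) * a n + 2 * d * (n + 1) * a (n + 1)
      + (n + 1) * (n + 2) * a (n + 2) = 0) (i : ℕ) :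
    ∑ j ∈ range (i + 2), qesEntry N d i j * a j = 0 := by
  cases i with
  | zero => simp [qesEntry, sum_range_succ, h0, h1]
  | succ n =>
    rw [sum_range_succ, sum_range_succ, sum_range_succ, sum_eq_zero fun j hj => by
      rw [qesEntry_eq_zero_of_outside_band (Or.inr (by simp only [mem_range] at hj; omega)),
        zero_mul]]
    simp only [qesEntry, Nat.add_eq_zero_iff, one_ne_zero, and_false, false_and, ↓reduceIte,
      Nat.left_eq_add, show n ≠ n + 1 + 1 by omega, Nat.add_left_cancel_iff, Nat.cast_add,
      Nat.cast_one, zero_add, and_self, OfNat.ofNat_ne_zero, OfNat.ofNat_ne_one, Nat.reduceEqDiff]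
    linear_combination hrec n

end QES

theorem even_parity_QES_quantization_general (N : ℕ) (d : ℝ) (a : ℕ → ℝ)
    (h0 : a 0 = 1) (h1 : a 1 = -d)
    (hrec : ∀ n : ℕ, (2 * (N : ℝ) - 2 * n) * a n + 2 * d * (n + 1) * a (n + 1)
      + (n + 1) * (n + 2) * a (n + 2) = 0) :
    a (N + 1) = 0 ↔ (Pmat N d (N + 1)).det = 0 := by
  rw [Pmat_eq_leadingBlock]
  exact (det_leadingBlock_eq_zero_iff (fun i j h => qesEntry_eq_zero_of_outside_band (Or.inl h))
    qesEntry_superdiag_ne_zero (by simp [h0]) (qesEntry_sum_range_eq_zero h0 h1 hrec) N).symm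

/-- The even-parity QES quantization condition: the terminating solutions, i.e. the
QES-compatible shifts `d`, are exactly the zeros of `d ↦ det P^(N,N+1)(d)`. -/
theorem even_parity_QES_quantization (N : ℕ) (hN : 1 ≤ N) (d : ℝ) (a : ℕ → ℝ)
    (h0 : a 0 = 1) (h1 : a 1 = -d)
    (hrec : ∀ n : ℕ, (2 * (N : ℝ) - 2 * n) * a n + 2 * d * (n + 1) * a (n + 1)
      + (n + 1) * (n + 2) * a (n + 2) = 0) :
    a (N + 1) = 0 ↔ (Pmat N d (N + 1)).det = 0 :=
  even_parity_QES_quantization_general N d a h0 h1 hrec
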